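/- Let Q₁, Q₂ be real symmetric positive definite d×d matrices, and for β > 0 define Q(β) := (1 + 1/β)Q₁ + (1 + β)Q₂. Let λ₁,…,λ_d > 0 be the eigenvalues (with multiplicity) of Q₂^{1/2} Q₁⁻¹ Q₂^{1/2}. If β₊ > 0 satisfies Σ_{i=1}^{d} (1 − β₊²λᵢ)/(1 + β₊λᵢ) = 0, then the second derivative of β ↦ log det Q(β) at β₊ equals (1/(β₊(1+β₊))) · Σ_{i=1}^{d} (β₊²λᵢ² + (1+2β₊)λᵢ)/(1 + β₊λᵢ)², which is strictly positive; hence β₊ is a strict local minimum of β ↦ log det Q(β). -/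

import Mathlib

/-!
With `M = Q₂^{1/2} Q₁⁻¹ Q₂^{1/2}` one has `Q₁⁻¹ Q(β) = Q₂^{-1/2} ((1 + 1/β) + (1 + β) M) Q₂^{1/2}`,
so `log det Q(β) = log det Q₁ + ∑ᵢ log (1 + 1/β + (1 + β) λᵢ)`. Since
`1 + 1/β + (1 + β) λ = (1 + β)(1 + βλ)/β`, the derivative of this is `-ψ(β) / (β(1 + β))` with
`ψ(β) = ∑ᵢ (1 - β²λᵢ)/(1 + βλᵢ)`; at a zero `β₊` of `ψ` only `-ψ'(β₊) / (β₊(1 + β₊))` survives in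
the second derivative, and this is the stated sum of positive terms. The derivative therefore
changes sign from `-` to `+` at `β₊`, which makes `β₊` a strict local minimum.
-/

open Matrix Filter Topology Set
open scoped MatrixOrder

/-- Strict form of the second-derivative test `isLocalMin_of_deriv_deriv_pos`. -/
theorem eventually_lt_of_deriv_deriv_pos {f : ℝ → ℝ} {x₀ : ℝ} (hf : 0 < deriv (deriv f) x₀)
    (hd : deriv f x₀ = 0) (hc : ContinuousAt f x₀) : ∀ᶠ x in 𝓝[≠] x₀, f x₀ < f x := by
  obtain ⟨r, hr, hsign⟩ := Metric.eventually_nhds_iff_ball.mp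
    (eventually_nhdsWithin_sign_eq_of_deriv_pos hf hd)
  rw [Real.ball_eq_Ioo] at hsign
  have hright : ∀ x ∈ Ioo x₀ (x₀ + r), 0 < deriv f x := fun x hx => by
    have := hsign x ⟨by linarith [hx.1], hx.2⟩
    rwa [sign_pos (sub_pos.mpr hx.1), sign_eq_one_iff] at this
  have hleft : ∀ x ∈ Ioo (x₀ - r) x₀, deriv f x < 0 := fun x hx => by
    have := hsign x ⟨hx.1, by linarith [hx.2]⟩
    rwa [sign_neg (sub_neg.mpr hx.2), sign_eq_neg_one_iff] at this
  have hcont : ContinuousOn f (Ioo (x₀ - r) (x₀ + r)) := by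
    intro x hx
    rcases lt_trichotomy x x₀ with hlt | rfl | hgt
    · exact (differentiableAt_of_deriv_ne_zero (hleft x ⟨hx.1, hlt⟩).ne).continuousAt
        |>.continuousWithinAt
    · exact hc.continuousWithinAt
    · exact (differentiableAt_of_deriv_ne_zero (hright x ⟨hgt, hx.2⟩).ne').continuousAt
        |>.continuousWithinAt
  have hmono : StrictMonoOn f (Ico x₀ (x₀ + r)) :=
    strictMonoOn_of_deriv_pos (convex_Ico _ _)
      (hcont.mono (Ico_subset_Ioo_left (by linarith))) (by rwa [interior_Ico])
  have hanti : StrictAntiOn f (Ioc (x₀ - r) x₀) :=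
    strictAntiOn_of_deriv_neg (convex_Ioc _ _)
      (hcont.mono (Ioc_subset_Ioo_right (by linarith))) (by rwa [interior_Ioc])
  rw [eventually_nhdsWithin_iff]
  filter_upwards [Ioo_mem_nhds (by linarith : x₀ - r < x₀) (by linarith : x₀ < x₀ + r)]
    with x hx hne
  rcases lt_or_gt_of_ne (hne : x ≠ x₀) with hlt | hgt
  · exact hanti ⟨hx.1, hlt.le⟩ ⟨by linarith, le_rfl⟩ hlt
  · exact hmono ⟨le_rfl, by linarith⟩ ⟨hgt.le, hx.2⟩ hgt

section Profile

variable {b l : ℝ}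

theorem hasDerivAt_log_one_add_one_div_add_mul (hb : 0 < b) (hl : 0 ≤ l) :
    HasDerivAt (fun x => Real.log (1 + 1 / x + (1 + x) * l))
      (-(1 / (b * (1 + b))) * ((1 - b ^ 2 * l) / (1 + b * l))) b := by
  have hinner : HasDerivAt (fun x => 1 + 1 / x + (1 + x) * l) (-(b ^ 2)⁻¹ + l) b := by
    simpa [one_div] using ((hasDerivAt_inv hb.ne').const_add 1).fun_add
      (((hasDerivAt_id b).const_add 1).mul_const l)
  refine (hinner.log (by positivity)).congr_deriv ?_
  field_simp
  ring

theorem hasDerivAt_one_sub_sq_mul_div (hbl : 1 + b * l ≠ 0) :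
    HasDerivAt (fun x => (1 - x ^ 2 * l) / (1 + x * l))
      (-((b ^ 2 * l ^ 2 + (1 + 2 * b) * l) / (1 + b * l) ^ 2)) b := by
  have hnum : HasDerivAt (fun x => 1 - x ^ 2 * l) (-(2 * b * l)) b := by
    simpa using ((hasDerivAt_pow 2 b).mul_const l).const_sub 1
  have hden : HasDerivAt (fun x => 1 + x * l) l b := by
    simpa using ((hasDerivAt_id b).mul_const l).const_add 1
  refine (hnum.fun_div hden hbl).congr_deriv ?_
  field_simp
  ring

variable {ι : Type*} [Fintype ι]

noncomputable def logDetProfile (c : ℝ) (lam : ι → ℝ) (x : ℝ) : ℝ :=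
  c + ∑ i, Real.log (1 + 1 / x + (1 + x) * lam i)

variable {c : ℝ} {lam : ι → ℝ}

theorem hasDerivAt_logDetProfile (hlam : ∀ i, 0 ≤ lam i) (hb : 0 < b) :
    HasDerivAt (logDetProfile c lam)
      (-(1 / (b * (1 + b))) * ∑ i, (1 - b ^ 2 * lam i) / (1 + b * lam i)) b := by
  rw [Finset.mul_sum]
  exact (HasDerivAt.fun_sum fun i _ =>
    hasDerivAt_log_one_add_one_div_add_mul hb (hlam i)).const_add c

theorem deriv_deriv_logDetProfile (hlam : ∀ i, 0 ≤ lam i) (hb : 0 < b)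
    (hcrit : ∑ i, (1 - b ^ 2 * lam i) / (1 + b * lam i) = 0) :
    deriv (deriv (logDetProfile c lam)) b =
      1 / (b * (1 + b)) * ∑ i, (b ^ 2 * lam i ^ 2 + (1 + 2 * b) * lam i) / (1 + b * lam i) ^ 2 := by
  have hderiv : deriv (logDetProfile c lam) =ᶠ[𝓝 b]
      fun x => -(1 / (x * (1 + x))) * ∑ i, (1 - x ^ 2 * lam i) / (1 + x * lam i) :=
    eventually_of_mem (Ioi_mem_nhds hb) fun x hx => (hasDerivAt_logDetProfile hlam hx).deriv
  have hcoef : DifferentiableAt ℝ (fun x : ℝ => -(1 / (x * (1 + x)))) b := by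
    have : b * (1 + b) ≠ 0 := by positivity
    fun_prop (disch := assumption)
  have hsum := HasDerivAt.fun_sum (u := Finset.univ) fun i _ =>
    hasDerivAt_one_sub_sq_mul_div (b := b) (l := lam i) (by have := hlam i; positivity)
  rw [hderiv.deriv_eq, (hcoef.hasDerivAt.fun_mul hsum).deriv, hcrit]
  simp [Finset.sum_neg_distrib]

end Profile

namespace Matrix

variable {n : Type*} [Fintype n] [DecidableEq n]

theorem IsHermitian.det_smul_one_add_smul {A : Matrix n n ℝ} (hA : A.IsHermitian) (u v : ℝ) :
    (u • (1 : Matrix n n ℝ) + v • A).det = ∏ i, (u + v * hA.eigenvalues i) := by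
  conv_lhs => rw [hA.spectral_theorem]
  set U := hA.eigenvectorUnitary
  rw [← map_one (Unitary.conjStarAlgAut ℝ _ U), ← map_smul, ← map_smul, ← map_add,
    Unitary.conjStarAlgAut_apply, det_mul, det_mul, mul_right_comm, ← det_mul,
    Unitary.mul_star_self_of_mem U.2, det_one, one_mul, ← diagonal_one, ← diagonal_smul,
    ← diagonal_smul, diagonal_add, det_diagonal]
  simp

theorem PosDef.sqrt_mul_inv_mul_sqrt {Q₁ Q₂ : Matrix n n ℝ} (hQ₁ : Q₁.PosDef) (hQ₂ : Q₂.PosDef) :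
    (CFC.sqrt Q₂ * Q₁⁻¹ * CFC.sqrt Q₂).PosDef := by
  have hS : IsUnit (CFC.sqrt Q₂) :=
    CFC.isUnit_sqrt_iff_isStrictlyPositive.mpr hQ₂.isStrictlyPositive
  have := hQ₁.inv.conjTranspose_mul_mul_same (mulVec_injective_iff_isUnit.mpr hS)
  rwa [(CFC.sqrt_nonneg Q₂).posSemidef.isHermitian.eq] at this

theorem det_smul_add_smul_eq_det_mul_prod_eigenvalues {Q₁ Q₂ : Matrix n n ℝ}
    (hQ₁ : IsUnit Q₁.det) (hQ₂ : Q₂.PosDef)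
    (hM : (CFC.sqrt Q₂ * Q₁⁻¹ * CFC.sqrt Q₂).IsHermitian) (u v : ℝ) :
    (u • Q₁ + v • Q₂).det = Q₁.det * ∏ i, (u + v * hM.eigenvalues i) := by
  set S := CFC.sqrt Q₂
  have hS : IsUnit S := CFC.isUnit_sqrt_iff_isStrictlyPositive.mpr hQ₂.isStrictlyPositive
  have hS' : IsUnit S.det := (isUnit_iff_isUnit_det S).mp hS
  have hconj : u • Q₁ + v • Q₂ = Q₁ * (S⁻¹ * (u • 1 + v • (S * Q₁⁻¹ * S)) * S) := by
    rw [← show S * S = Q₂ from CFC.sqrt_mul_sqrt_self Q₂ hQ₂.posSemidef.nonneg]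
    simp only [Matrix.mul_add, Matrix.add_mul, Matrix.mul_smul, Matrix.smul_mul, Matrix.mul_one,
      Matrix.mul_assoc, nonsing_inv_mul_cancel_left _ _ hS', nonsing_inv_mul _ hS',
      mul_nonsing_inv_cancel_left _ _ hQ₁]
  rw [hconj, det_mul, det_conj' hS, hM.det_smul_one_add_smul]

theorem log_det_eq_logDetProfile {Q₁ Q₂ : Matrix n n ℝ} (hQ₁ : Q₁.PosDef) (hQ₂ : Q₂.PosDef)
    (hM : (CFC.sqrt Q₂ * Q₁⁻¹ * CFC.sqrt Q₂).IsHermitian) {b : ℝ} (hb : 0 < b) :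
    Real.log ((1 + 1 / b) • Q₁ + (1 + b) • Q₂).det
      = logDetProfile (Real.log Q₁.det) hM.eigenvalues b := by
  have hfactor : ∀ i, 1 + 1 / b + (1 + b) * hM.eigenvalues i ≠ 0 := fun i => by
    have := (hQ₁.sqrt_mul_inv_mul_sqrt hQ₂).eigenvalues_pos i
    positivity
  rw [det_smul_add_smul_eq_det_mul_prod_eigenvalues hQ₁.det_pos.ne'.isUnit hQ₂ hM,
    Real.log_mul hQ₁.det_pos.ne' (Finset.prod_ne_zero_iff.mpr fun i _ => hfactor i),
    Real.log_prod fun i _ => hfactor i, logDetProfile]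

end Matrix

/-- With `Q(β) := (1 + 1/β) Q₁ + (1 + β) Q₂` for symmetric positive definite
`Q₁, Q₂`, and `λ₁, …, λ_d` the eigenvalues of `Q₂^{1/2} Q₁⁻¹ Q₂^{1/2}`: if `β₊ > 0` satisfies
the first-order condition `∑ i, (1 - β₊²λᵢ)/(1 + β₊λᵢ) = 0`, then the second derivative of
`β ↦ log det Q(β)` at `β₊` equals
`(1/(β₊(1+β₊))) ∑ i, (β₊²λᵢ² + (1+2β₊)λᵢ)/(1+β₊λᵢ)²`, which is strictly positive; hence `β₊`
is a strict local minimum of `β ↦ log det Q(β)`. -/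
theorem second_deriv_logdet_Q_pos_at_critical
    (d : ℕ) (hd : 1 ≤ d) (Q₁ Q₂ : Matrix (Fin d) (Fin d) ℝ)
    (hQ₁ : Q₁.PosDef) (hQ₂ : Q₂.PosDef)
    (hM : (CFC.sqrt Q₂ * Q₁⁻¹ * CFC.sqrt Q₂).IsHermitian)
    (lam : Fin d → ℝ) (hlam : lam = hM.eigenvalues)
    (βp : ℝ) (hβp : 0 < βp)
    (hcrit : ∑ i, (1 - βp ^ 2 * lam i) / (1 + βp * lam i) = 0) :
    deriv (deriv (fun b : ℝ => Real.log ((1 + 1 / b) • Q₁ + (1 + b) • Q₂).det)) βp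
      = (1 / (βp * (1 + βp)))
        * ∑ i, (βp ^ 2 * lam i ^ 2 + (1 + 2 * βp) * lam i) / (1 + βp * lam i) ^ 2 ∧
    0 < (1 / (βp * (1 + βp)))
        * ∑ i, (βp ^ 2 * lam i ^ 2 + (1 + 2 * βp) * lam i) / (1 + βp * lam i) ^ 2 ∧
    ∃ ε > 0, ∀ b : ℝ, b ≠ βp → |b - βp| < ε →
      Real.log ((1 + 1 / βp) • Q₁ + (1 + βp) • Q₂).det
        < Real.log ((1 + 1 / b) • Q₁ + (1 + b) • Q₂).det := by
  have hlam_pos : ∀ i, 0 < lam i := hlam ▸ (hQ₁.sqrt_mul_inv_mul_sqrt hQ₂).eigenvalues_pos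
  have hlam_nonneg : ∀ i, 0 ≤ lam i := fun i => (hlam_pos i).le
  have hF : (fun b : ℝ => Real.log ((1 + 1 / b) • Q₁ + (1 + b) • Q₂).det) =ᶠ[𝓝 βp]
      logDetProfile (Real.log Q₁.det) lam :=
    eventually_of_mem (Ioi_mem_nhds hβp) fun b hb => hlam ▸ log_det_eq_logDetProfile hQ₁ hQ₂ hM hb
  have hF' := (hasDerivAt_logDetProfile hlam_nonneg hβp).congr_of_eventuallyEq hF
  have hF'' := hF.deriv.deriv_eq.trans (deriv_deriv_logDetProfile hlam_nonneg hβp hcrit)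
  have hT : 0 < (1 / (βp * (1 + βp)))
      * ∑ i, (βp ^ 2 * lam i ^ 2 + (1 + 2 * βp) * lam i) / (1 + βp * lam i) ^ 2 := by
    have : Nonempty (Fin d) := ⟨⟨0, hd⟩⟩
    refine mul_pos (by positivity) (Finset.sum_pos (fun i _ => ?_) Finset.univ_nonempty)
    have := hlam_pos i
    positivity
  refine ⟨hF'', hT, ?_⟩
  have hmin := eventually_lt_of_deriv_deriv_pos (hF'' ▸ hT)
    (by rw [hF'.deriv, hcrit, mul_zero]) hF'.continuousAt
  obtain ⟨ε, hε, h⟩ := Metric.eventually_nhds_iff.mp (eventually_nhdsWithin_iff.mp hmin)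
  exact ⟨ε, hε, fun b hne hb => h (by rwa [Real.dist_eq]) hne⟩
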